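/- arXiv:2112.05133 — 2 statements merged into one kernel-verified Lean document; each statement's English description precedes it below -/
import Mathlib

section
/- For every m ≥ 1 points x₁, …, x_m in the unit square [0,1]², there exists an ordering (a permutation σ of {1,…,m}) such that the total length of the path visiting the points in that order, i.e. ∑_{i=1}^{m-1} dist(x_{σ(i)}, x_{σ(i+1)}), is at most 2·⌈√m⌉ + 2. -/
/-!
Cut the square into `k = ⌈√m⌉` horizontal strips of height `1/k` and visit them one after the
other, alternately left to right and right to left. Sorting the points by the resulting
"snake" key `φ`, each step of the path costs at most the increase of `φ` plus `1/k`. The key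
grows by at most `k + 1` along the whole path and the `m - 1` terms `1/k` add at most `k`.
-/

open Finset

theorem Fin.sum_succ_sub_castSucc {M : Type*} [AddCommGroup M] {n : ℕ} (g : Fin (n + 1) → M) :
    ∑ i : Fin n, (g i.succ - g i.castSucc) = g (last n) - g 0 := by
  induction n with
  | zero => simp
  | succ n ih =>
    rw [Fin.sum_univ_castSucc]
    simp only [Fin.succ_castSucc]
    rw [ih (fun i => g i.castSucc)]
    simp

def pathLength {α : Type*} [PseudoMetricSpace α] {n : ℕ} (y : Fin (n + 1) → α) : ℝ :=
  ∑ i : Fin n, dist (y i.castSucc) (y i.succ)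

theorem sum_dite_dist_eq_pathLength {α : Type*} [PseudoMetricSpace α] {n : ℕ}
    (y : Fin (n + 1) → α) :
    (∑ i : Fin (n + 1), if h : (i : ℕ) + 1 < n + 1 then dist (y i) (y ⟨(i : ℕ) + 1, h⟩) else 0)
      = pathLength y := by
  rw [Fin.sum_univ_castSucc]
  simp [pathLength, Fin.succ]

theorem exists_perm_pathLength_le {α : Type*} [PseudoMetricSpace α] {n : ℕ}
    (y : Fin (n + 1) → α) (f : Fin (n + 1) → ℝ) {c L U : ℝ} (hf : ∀ i, f i ∈ Set.Icc L U)
    (hdist : ∀ i j, dist (y i) (y j) ≤ |f i - f j| + c) :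
    ∃ σ : Equiv.Perm (Fin (n + 1)), pathLength (y ∘ σ) ≤ U - L + n * c := by
  set σ := Tuple.sort f
  have hmono : Monotone (f ∘ σ) := Tuple.monotone_sort f
  have hstep (i : Fin n) :
      dist (y (σ i.castSucc)) (y (σ i.succ)) ≤ f (σ i.succ) - f (σ i.castSucc) + c := by
    have hle : f (σ i.castSucc) ≤ f (σ i.succ) := hmono (Fin.castSucc_le_succ i)
    have := hdist (σ i.castSucc) (σ i.succ)
    rwa [abs_sub_comm, abs_of_nonneg (sub_nonneg.2 hle)] at this
  refine ⟨σ, ?_⟩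
  calc pathLength (y ∘ σ) ≤ ∑ i : Fin n, (f (σ i.succ) - f (σ i.castSucc) + c) :=
        sum_le_sum fun i _ => hstep i
    _ = f (σ (Fin.last n)) - f (σ 0) + n * c := by
        rw [sum_add_distrib, Fin.sum_succ_sub_castSucc (fun i => f (σ i))]
        simp
    _ ≤ U - L + n * c := by linarith [(hf (σ (Fin.last n))).2, (hf (σ 0)).1]

-- The `min` puts the top edge `b = 1` into the last strip `k - 1`.
noncomputable def stripIndex (k : ℕ) (b : ℝ) : ℕ := min ⌊b * k⌋₊ (k - 1)

def snakeOffset (i : ℕ) (a : ℝ) : ℝ := if Even i then a else 1 - a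

-- Strip `i` is laid on the interval `[i (1 + 1/k), i (1 + 1/k) + 1]`; the gap `1/k` between
-- consecutive strips pays for the vertical part of a step.
noncomputable def snakeKey (k : ℕ) (a b : ℝ) : ℝ :=
  stripIndex k b * (1 + 1 / k) + snakeOffset (stripIndex k b) a

theorem stripIndex_le_mul (k : ℕ) {b : ℝ} (hb : 0 ≤ b) : (stripIndex k b : ℝ) ≤ b * k :=
  (Nat.cast_le.2 (min_le_left _ _)).trans (Nat.floor_le (by positivity))

theorem mul_le_stripIndex_add_one {k : ℕ} (hk : 0 < k) {b : ℝ} (hb : b ≤ 1) :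
    b * k ≤ stripIndex k b + 1 := by
  rcases min_choice ⌊b * k⌋₊ (k - 1) with h | h <;> rw [stripIndex, h]
  · exact (Nat.lt_floor_add_one _).le
  · rw [Nat.cast_pred hk]
    nlinarith

theorem abs_sub_mul_le_stripIndex {k : ℕ} (hk : 0 < k) {b₁ b₂ : ℝ}
    (hb₁ : b₁ ∈ Set.Icc (0 : ℝ) 1) (hb₂ : b₂ ∈ Set.Icc (0 : ℝ) 1) :
    |b₁ - b₂| * k ≤ |(stripIndex k b₁ : ℝ) - stripIndex k b₂| + 1 := by
  have h₁ := stripIndex_le_mul k hb₁.1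
  have h₂ := stripIndex_le_mul k hb₂.1
  have h₁' := mul_le_stripIndex_add_one hk hb₁.2
  have h₂' := mul_le_stripIndex_add_one hk hb₂.2
  rw [← abs_of_pos (Nat.cast_pos.2 hk : (0 : ℝ) < k), ← abs_mul, sub_mul]
  rw [abs_le] at *
  constructor <;> cases abs_cases ((stripIndex k b₁ : ℝ) - stripIndex k b₂) <;> linarith

theorem snakeOffset_mem (i : ℕ) {a : ℝ} (ha : a ∈ Set.Icc (0 : ℝ) 1) :
    snakeOffset i a ∈ Set.Icc (0 : ℝ) 1 := by
  unfold snakeOffset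
  split_ifs
  · exact ha
  · exact ⟨by linarith [ha.2], by linarith [ha.1]⟩

theorem abs_snakeOffset_sub (i : ℕ) (a₁ a₂ : ℝ) :
    |snakeOffset i a₁ - snakeOffset i a₂| = |a₁ - a₂| := by
  unfold snakeOffset
  split_ifs
  · rfl
  · rw [sub_sub_sub_cancel_left, abs_sub_comm]

theorem abs_sub_le_snakeOffset {i j : ℕ} (hij : i < j) {a₁ a₂ : ℝ}
    (ha₁ : a₁ ∈ Set.Icc (0 : ℝ) 1) (ha₂ : a₂ ∈ Set.Icc (0 : ℝ) 1) :
    |a₁ - a₂| ≤ (j - i : ℝ) + snakeOffset j a₂ - snakeOffset i a₁ := by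
  obtain ⟨d, rfl⟩ := Nat.exists_eq_add_of_lt hij
  rcases d with _ | d
  · -- adjacent strips are traversed in opposite directions
    obtain ⟨ha₁0, ha₁1⟩ := ha₁
    obtain ⟨ha₂0, ha₂1⟩ := ha₂
    unfold snakeOffset
    push_cast
    rw [abs_le]
    by_cases hi : Even i <;> simp [hi, Nat.even_add_one] <;> constructor <;> linarith
  · have h₁ := snakeOffset_mem i ha₁
    have h₂ := snakeOffset_mem (i + (d + 1) + 1) ha₂
    rw [abs_le]
    push_cast
    constructor <;> linarith [ha₁.1, ha₁.2, ha₂.1, ha₂.2, h₁.1, h₁.2, h₂.1, h₂.2]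

theorem snakeKey_mem {k : ℕ} (hk : 0 < k) {a : ℝ} (ha : a ∈ Set.Icc (0 : ℝ) 1) (b : ℝ) :
    snakeKey k a b ∈ Set.Icc (0 : ℝ) (k + 1) := by
  have hi : (stripIndex k b : ℝ) ≤ k - 1 := by
    rw [← Nat.cast_pred hk]; exact Nat.cast_le.2 (min_le_right _ _)
  have hs := snakeOffset_mem (stripIndex k b) ha
  have hk' : (1 : ℝ) ≤ k := Nat.one_le_cast.2 hk
  have hkinv : (k : ℝ) * (1 / k) = 1 := by field_simp
  unfold snakeKey
  constructor
  · have := hs.1; positivity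
  · nlinarith [hs.2, one_div_pos.2 (by linarith : (0:ℝ) < k)]

theorem abs_sub_add_abs_sub_le_snakeKey {k : ℕ} (hk : 0 < k) {a₁ b₁ a₂ b₂ : ℝ}
    (ha₁ : a₁ ∈ Set.Icc (0 : ℝ) 1) (hb₁ : b₁ ∈ Set.Icc (0 : ℝ) 1)
    (ha₂ : a₂ ∈ Set.Icc (0 : ℝ) 1) (hb₂ : b₂ ∈ Set.Icc (0 : ℝ) 1) :
    |a₁ - a₂| + |b₁ - b₂| ≤ |snakeKey k a₁ b₁ - snakeKey k a₂ b₂| + 1 / k := by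
  wlog hle : stripIndex k b₁ ≤ stripIndex k b₂ generalizing a₁ b₁ a₂ b₂
  · have := this ha₂ hb₂ ha₁ hb₁ (le_of_not_ge hle)
    rwa [abs_sub_comm a₂, abs_sub_comm b₂, abs_sub_comm (snakeKey k a₂ b₂)] at this
  have hk' : (0 : ℝ) < k := Nat.cast_pos.2 hk
  have hb : |b₁ - b₂| ≤ (|(stripIndex k b₁ : ℝ) - stripIndex k b₂| + 1) / k :=
    (le_div_iff₀ hk').2 (abs_sub_mul_le_stripIndex hk hb₁ hb₂)
  unfold snakeKey
  set i := stripIndex k b₁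
  set j := stripIndex k b₂
  rcases hle.eq_or_lt with hij | hij
  · rw [← hij, sub_self, abs_zero, zero_add] at hb
    rw [← hij, add_sub_add_left_eq_sub, abs_snakeOffset_sub]
    linarith
  · have hij' : (i : ℝ) + 1 ≤ j := by exact_mod_cast hij
    have ha := abs_sub_le_snakeOffset hij ha₁ ha₂
    have h₁ := snakeOffset_mem i ha₁
    have h₂ := snakeOffset_mem j ha₂
    have hji : |(i : ℝ) - j| = j - i := by rw [abs_sub_comm]; exact abs_of_nonneg (by linarith)
    have hkey :
        0 ≤ (j * (1 + 1 / k) + snakeOffset j a₂) - (i * (1 + 1 / k) + snakeOffset i a₁ : ℝ) := by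
      nlinarith [h₁.2, h₂.1, one_div_pos.2 hk']
    rw [hji] at hb
    rw [abs_sub_comm (_ + _), abs_of_nonneg hkey]
    calc |a₁ - a₂| + |b₁ - b₂|
        ≤ (j - i : ℝ) + snakeOffset j a₂ - snakeOffset i a₁ + (j - i + 1) / k := add_le_add ha hb
      _ = _ := by ring

theorem EuclideanSpace.dist_le_abs_add_abs (p q : EuclideanSpace ℝ (Fin 2)) :
    dist p q ≤ |p 0 - q 0| + |p 1 - q 1| := by
  rw [EuclideanSpace.dist_eq, Fin.sum_univ_two, Real.sqrt_le_left (by positivity),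
    Real.dist_eq, Real.dist_eq]
  nlinarith [abs_nonneg (p 0 - q 0), abs_nonneg (p 1 - q 1)]

theorem tsp_strip_bound_general (m : ℕ)
    (x : Fin m → EuclideanSpace ℝ (Fin 2))
    (hx : ∀ i, ∀ j, x i j ∈ Set.Icc (0 : ℝ) 1) :
    ∃ σ : Equiv.Perm (Fin m),
      (∑ i : Fin m, if h : (i : ℕ) + 1 < m
        then dist (x (σ i)) (x (σ ⟨(i : ℕ) + 1, h⟩)) else 0)
        ≤ 2 * (⌈Real.sqrt m⌉₊ : ℝ) + 2 := by
  cases m with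
  | zero => exact ⟨1, by simp⟩
  | succ n =>
    set k := ⌈Real.sqrt (n + 1 : ℕ)⌉₊
    have hk : 0 < k := Nat.ceil_pos.2 (Real.sqrt_pos.2 (by positivity))
    have hnk : (n : ℝ) * (1 / k) ≤ k := by
      have hsq : ((n + 1 : ℕ) : ℝ) ≤ (k : ℝ) ^ 2 :=
        (Real.sqrt_le_left (by positivity)).1 (Nat.le_ceil _)
      push_cast at hsq
      rw [mul_one_div, div_le_iff₀ (Nat.cast_pos.2 hk)]
      nlinarith
    obtain ⟨σ, hσ⟩ := exists_perm_pathLength_le x (fun i => snakeKey k (x i 0) (x i 1))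
      (fun i => snakeKey_mem hk (hx i 0) _) fun i j =>
        (EuclideanSpace.dist_le_abs_add_abs _ _).trans
          (abs_sub_add_abs_sub_le_snakeKey hk (hx i 0) (hx i 1) (hx j 0) (hx j 1))
    refine ⟨σ, (sum_dite_dist_eq_pathLength (x ∘ σ)).trans_le ?_⟩
    linarith

/-- Euclidean TSP strip bound: for m ≥ 1 points in the unit square [0,1]²,
there is an ordering of the points whose total path length is at most 2⌈√m⌉ + 2. -/
theorem tsp_strip_bound (m : ℕ) (hm : 1 ≤ m)
    (x : Fin m → EuclideanSpace ℝ (Fin 2))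
    (hx : ∀ i, ∀ j, x i j ∈ Set.Icc (0 : ℝ) 1) :
    ∃ σ : Equiv.Perm (Fin m),
      (∑ i : Fin m, if h : (i : ℕ) + 1 < m
        then dist (x (σ i)) (x (σ ⟨(i : ℕ) + 1, h⟩)) else 0)
        ≤ 2 * (⌈Real.sqrt m⌉₊ : ℝ) + 2 :=
  tsp_strip_bound_general m x hx
end

section
/- Let n ≥ 1 and let S be a finite subset of the grid {1,…,n} × {1,…,n} (viewed as unit faces), and let ∂S denote its edge boundary within ℤ². Then |S| ≤ |∂S| · n / 4. -/
/-!
Each occupied row of `S` holds at most `n` cells, so `|S| ≤ n · #rows`, and likewise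
`|S| ≤ n · #cols`. The rightmost cell of an occupied row has a boundary edge to its right and the
leftmost one an edge to its left; the same holds for columns upward and downward. These
`2 · #rows + 2 · #cols` edges are distinct, hence `4 |S| ≤ n |∂S|`.
-/

open Finset

section Exits

variable {G : Type*} [AddGroup G] [DecidableEq G]

def exits (S : Finset G) (d : G) : Finset G := {p ∈ S | p + d ∉ S}

theorem sum_card_exits_le_card (S D : Finset G) (B : Finset (G × G))
    (hB : ∀ d ∈ D, ∀ p ∈ exits S d, (p, p + d) ∈ B) :
    ∑ d ∈ D, #(exits S d) ≤ #B := by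
  have hdisj : (D : Set G).PairwiseDisjoint fun d ↦ (exits S d).image fun p ↦ (p, p + d) := by
    intro d _ d' _ hne
    simp only [Function.onFun, disjoint_left, mem_image]
    rintro _ ⟨p, -, rfl⟩ ⟨q, -, hq⟩
    obtain ⟨rfl, hq⟩ := Prod.mk.inj hq
    exact hne (add_left_cancel hq).symm
  calc ∑ d ∈ D, #(exits S d)
      = ∑ d ∈ D, #((exits S d).image fun p ↦ (p, p + d)) := by
        refine sum_congr rfl fun d _ ↦ (card_image_of_injective _ ?_).symm
        exact fun p q h ↦ (Prod.ext_iff.mp h).1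
    _ = #(D.biUnion fun d ↦ (exits S d).image fun p ↦ (p, p + d)) := (card_biUnion hdisj).symm
    _ ≤ #B := card_le_card <| biUnion_subset.mpr fun d hd ↦
        image_subset_iff.mpr fun p hp ↦ hB d hd p hp

end Exits

/-- The cell of a line `f = r` that is farthest along `g` leaves `S` under `g`. -/
theorem card_image_le_card_filter_apply_notMem {α β γ : Type*} [DecidableEq α] [DecidableEq β]
    [LinearOrder γ]
    (S : Finset α) (f : α → β) (h : α → γ) (g : α → α)
    (hf : ∀ p, f (g p) = f p) (hh : ∀ p, h p < h (g p)) :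
    #(S.image f) ≤ #{p ∈ S | g p ∉ S} := by
  refine (card_le_card (t := {p ∈ S | g p ∉ S}.image f) ?_).trans card_image_le
  intro r hr
  obtain ⟨q, hq, rfl⟩ := mem_image.mp hr
  obtain ⟨p, hp, hmax⟩ := exists_max_image {x ∈ S | f x = f q} h ⟨q, mem_filter.mpr ⟨hq, rfl⟩⟩
  rw [mem_filter] at hp
  refine mem_image.mpr ⟨p, mem_filter.mpr ⟨hp.1, fun hgp ↦ ?_⟩, hp.2⟩
  exact (hh p).not_ge (hmax (g p) (mem_filter.mpr ⟨hgp, (hf p).trans hp.2⟩))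

theorem card_le_card_mul_card_image {α β γ : Type*} [DecidableEq β]
    (S : Finset α) (T : Finset γ) (f : α → β) (g : α → γ)
    (hg : ∀ p ∈ S, g p ∈ T) (hfg : ∀ p ∈ S, ∀ q ∈ S, f p = f q → g p = g q → p = q) :
    #S ≤ #T * #(S.image f) := by
  refine card_le_mul_card_image S _ fun r _ ↦ card_le_card_of_injOn g ?_ ?_
  · exact fun p hp ↦ hg p (mem_filter.mp hp).1
  · intro p hp q hq
    rw [coe_filter, Set.mem_ofPred_eq] at hp hq
    exact hfg p hp.1 q hq.1 (hp.2.trans hq.2.symm)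

theorem card_image_snd_le_card_exits (S : Finset (ℤ × ℤ)) {a : ℤ} (ha : a ≠ 0) :
    #(S.image Prod.snd) ≤ #(exits S (a, 0)) :=
  card_image_le_card_filter_apply_notMem S Prod.snd (fun p ↦ a * p.1) (· + (a, 0))
    (fun _ ↦ add_zero _)
    fun p ↦ by simp only [Prod.fst_add]; nlinarith [mul_self_pos.mpr ha]

theorem card_image_fst_le_card_exits (S : Finset (ℤ × ℤ)) {a : ℤ} (ha : a ≠ 0) :
    #(S.image Prod.fst) ≤ #(exits S (0, a)) :=
  card_image_le_card_filter_apply_notMem S Prod.fst (fun p ↦ a * p.2) (· + (0, a))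
    (fun _ ↦ add_zero _)
    fun p ↦ by simp only [Prod.snd_add]; nlinarith [mul_self_pos.mpr ha]

theorem box_isoperimetry_general (n : ℕ)
    (S : Finset (ℤ × ℤ))
    (hS : ∀ q ∈ S, q.1 ∈ Finset.Icc (1 : ℤ) n ∧ q.2 ∈ Finset.Icc (1 : ℤ) n)
    (B : Finset ((ℤ × ℤ) × (ℤ × ℤ)))
    (hB : ∀ e : (ℤ × ℤ) × (ℤ × ℤ),
      e ∈ B ↔ e.1 ∈ S ∧ e.2 ∉ S ∧ |e.1.1 - e.2.1| + |e.1.2 - e.2.2| = 1) :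
    (S.card : ℝ) ≤ (B.card : ℝ) * n / 4 := by
  have hcard : #(Icc (1 : ℤ) n) = n := by simp
  have hrows : #S ≤ n * #(S.image Prod.snd) := hcard ▸
    card_le_card_mul_card_image S _ Prod.snd Prod.fst (fun p hp ↦ (hS p hp).1)
      fun p _ q _ h₂ h₁ ↦ Prod.ext h₁ h₂
  have hcols : #S ≤ n * #(S.image Prod.fst) := hcard ▸
    card_le_card_mul_card_image S _ Prod.fst Prod.snd (fun p hp ↦ (hS p hp).2)
      fun p _ q _ h₁ h₂ ↦ Prod.ext h₁ h₂
  have hexits := sum_card_exits_le_card S {(1, 0), (-1, 0), (0, 1), (0, -1)} B fun d hd p hp ↦ by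
    rw [exits, mem_filter] at hp
    simp only [mem_insert, mem_singleton] at hd
    rcases hd with rfl | rfl | rfl | rfl <;> simp [hB, hp]
  rw [sum_insert (by decide), sum_insert (by decide), sum_insert (by decide), sum_singleton]
    at hexits
  have hright := card_image_snd_le_card_exits S one_ne_zero
  have hleft := card_image_snd_le_card_exits S (neg_ne_zero.mpr one_ne_zero)
  have hup := card_image_fst_le_card_exits S one_ne_zero
  have hdown := card_image_fst_le_card_exits S (neg_ne_zero.mpr one_ne_zero)
  have hperim : 2 * #(S.image Prod.snd) + 2 * #(S.image Prod.fst) ≤ #B := by omega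
  have hmain : 4 * #S ≤ n * #B := by
    calc 4 * #S ≤ n * (2 * #(S.image Prod.snd) + 2 * #(S.image Prod.fst)) := by linarith
      _ ≤ n * #B := Nat.mul_le_mul_left n hperim
  rw [le_div_iff₀ four_pos]
  exact_mod_cast (by linarith : #S * 4 ≤ #B * n)

/-- Isoperimetry in a box: a set S of faces of the n × n grid satisfies
|S| ≤ |∂S|·n/4, where ∂S is the edge boundary in ℤ². -/
theorem box_isoperimetry (n : ℕ) (hn : 1 ≤ n)
    (S : Finset (ℤ × ℤ))
    (hS : ∀ q ∈ S, q.1 ∈ Finset.Icc (1 : ℤ) n ∧ q.2 ∈ Finset.Icc (1 : ℤ) n)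
    (B : Finset ((ℤ × ℤ) × (ℤ × ℤ)))
    (hB : ∀ e : (ℤ × ℤ) × (ℤ × ℤ),
      e ∈ B ↔ e.1 ∈ S ∧ e.2 ∉ S ∧ |e.1.1 - e.2.1| + |e.1.2 - e.2.2| = 1) :
    (S.card : ℝ) ≤ (B.card : ℝ) * n / 4 :=
  box_isoperimetry_general n S hS B hB
end
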